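/- For any integer r ≥ 2: ∑_{n=0}^∞ 1 / (F_{2^r n + 2^{r-1}} · Φ^{2^r n + 2^{r-1}}) = ∑_{n=1}^∞ 1 / F_{2^r n}. -/

import Mathlib

/-!
For even `k` we have `ψ ^ k = φ⁻¹ ^ k`, so `F_{2k} = F_k L_k` reads
`F_{2k} φ^{2k} = F_k φ^k (φ^{2k} + 1)`, i.e. `1/(F_k φ^k) - 1/(F_{2k} φ^{2k}) = 1/F_{2k}`.
Telescoping along `k, 2k, 4k, …` gives `1/(F_k φ^k) = ∑_{j ≥ 1} 1/F_{2^j k}`. For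
`k = 2^{r-1}(2n+1)`, which is even since `r ≥ 2`, these indices are `2^r · 2^j (2n+1)`, and as
`(n, j)` ranges over `ℕ × ℕ` the numbers `2^j (2n+1)` run through the positive integers exactly
once.
-/

open Filter Finset Topology

/-- The golden ratio `Φ = (1 + √5)/2`. -/
noncomputable def Phi : ℝ := (1 + Real.sqrt 5) / 2

open Real goldenRatio

namespace Nat

theorem two_pow_mul_odd_injective :
    Function.Injective fun p : ℕ × ℕ => 2 ^ p.2 * (2 * p.1 + 1) := by
  intro ⟨n, j⟩ ⟨n', j'⟩ h
  have hval (n j : ℕ) : padicValNat 2 (2 ^ j * (2 * n + 1)) = j := by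
    rw [padicValNat.mul (by positivity) (by omega), padicValNat.prime_pow,
      padicValNat.eq_zero_of_not_dvd (by omega), add_zero]
  have hj : j = j' := by simpa only [hval] using congrArg (padicValNat 2) h
  subst hj
  have : 2 * n + 1 = 2 * n' + 1 := Nat.eq_of_mul_eq_mul_left (by positivity) h
  simp only [Prod.mk.injEq, and_true]
  omega

theorem range_two_pow_mul_odd :
    Set.range (fun p : ℕ × ℕ => 2 ^ p.2 * (2 * p.1 + 1)) = {m | m ≠ 0} := by
  ext m
  refine ⟨by rintro ⟨p, rfl⟩; exact mul_ne_zero (by positivity) (by omega), fun hm => ?_⟩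
  obtain ⟨j, _, ⟨n, rfl⟩, rfl⟩ := exists_eq_two_pow_mul_odd hm
  exact ⟨(n, j), rfl⟩

end Nat

theorem tsum_eq_tsum_tsum_two_pow_mul_odd {E : Type*} [NormedAddCommGroup E] [CompleteSpace E]
    {g : ℕ → E} (hg : Summable g) (hg0 : g 0 = 0) :
    ∑' m, g m = ∑' (n) (j), g (2 ^ j * (2 * n + 1)) := by
  have hsupp : Function.support g ⊆ Set.range fun p : ℕ × ℕ => 2 ^ p.2 * (2 * p.1 + 1) := by
    rw [Nat.range_two_pow_mul_odd]
    rintro m hm rfl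
    exact hm hg0
  rw [← Nat.two_pow_mul_odd_injective.tsum_eq hsupp]
  exact (hg.comp_injective Nat.two_pow_mul_odd_injective).tsum_prod

namespace Real

theorem goldenRatio_pow_le_sq_mul_fib {n : ℕ} (hn : n ≠ 0) : φ ^ n ≤ φ ^ 2 * Nat.fib n := by
  obtain ⟨n, rfl⟩ := Nat.exists_eq_add_one_of_ne_zero hn
  have hmono : (Nat.fib n : ℝ) ≤ Nat.fib (n + 1) := by exact_mod_cast Nat.fib_le_fib_succ
  rw [← goldenRatio_mul_fib_succ_add_fib, goldenRatio_sq]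
  linarith

theorem summable_one_div_fib : Summable fun n => 1 / (Nat.fib n : ℝ) := by
  have hbound (n : ℕ) : 1 / (Nat.fib n : ℝ) ≤ φ ^ 2 * φ⁻¹ ^ n := by
    rcases Nat.eq_zero_or_pos n with rfl | hn
    · simp
      positivity
    have hfib : (0 : ℝ) < Nat.fib n := by exact_mod_cast Nat.fib_pos.mpr hn
    rw [inv_pow, ← div_eq_mul_inv, div_le_div_iff₀ hfib (by positivity), one_mul]
    exact goldenRatio_pow_le_sq_mul_fib hn.ne'
  refine Summable.of_nonneg_of_le (fun n => by positivity) hbound ?_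
  exact (summable_geometric_of_lt_one (by positivity)
    (inv_lt_one_of_one_lt₀ one_lt_goldenRatio)).mul_left _

theorem fib_two_mul_mul_goldenRatio_pow (k : ℕ) :
    (Nat.fib (2 * k) : ℝ) * φ ^ (2 * k) = Nat.fib k * φ ^ k * (φ ^ (2 * k) + (-1) ^ k) := by
  rw [coe_fib_eq, coe_fib_eq, ← goldenRatio_mul_goldenConj]
  -- `φ` and `ψ` are reducible, so `ring` would unfold them: make them atoms first.
  generalize φ = a
  generalize ψ = b
  ring

theorem one_div_fib_mul_goldenRatio_pow_of_even {k : ℕ} (hk : Even k) :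
    1 / ((Nat.fib k : ℝ) * φ ^ k) =
      1 / (Nat.fib (2 * k) : ℝ) + 1 / ((Nat.fib (2 * k) : ℝ) * φ ^ (2 * k)) := by
  rcases eq_or_ne k 0 with rfl | hk0
  · simp
  have hfib (n : ℕ) (hn : n ≠ 0) : (Nat.fib n : ℝ) ≠ 0 := by
    exact_mod_cast (Nat.fib_pos.mpr (Nat.pos_of_ne_zero hn)).ne'
  have hdouble := fib_two_mul_mul_goldenRatio_pow k
  rw [hk.neg_one_pow] at hdouble
  have := hfib k hk0
  have := hfib (2 * k) (by omega)
  field_simp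
  linear_combination hdouble

theorem tendsto_one_div_fib_mul_goldenRatio_pow :
    Tendsto (fun n => 1 / ((Nat.fib n : ℝ) * φ ^ n)) atTop (𝓝 0) := by
  refine squeeze_zero (fun n => by positivity) (fun n => ?_)
    summable_one_div_fib.tendsto_atTop_zero
  rw [← div_div]
  exact div_le_self (by positivity) (one_le_pow₀ one_lt_goldenRatio.le)

theorem hasSum_one_div_fib_two_pow_mul {k : ℕ} (hk : Even k) (hk0 : k ≠ 0) :
    HasSum (fun j => 1 / (Nat.fib (2 ^ (j + 1) * k) : ℝ)) (1 / ((Nat.fib k : ℝ) * φ ^ k)) := by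
  set t : ℕ → ℝ := fun j => 1 / ((Nat.fib (2 ^ j * k) : ℝ) * φ ^ (2 ^ j * k))
  have hstep (j : ℕ) : 1 / (Nat.fib (2 ^ (j + 1) * k) : ℝ) = t j - t (j + 1) := by
    have := one_div_fib_mul_goldenRatio_pow_of_even (hk.mul_left (2 ^ j))
    rw [← mul_assoc, ← pow_succ'] at this
    simp only [t, this, add_sub_cancel_right]
  have htend : Tendsto t atTop (𝓝 0) :=
    tendsto_one_div_fib_mul_goldenRatio_pow.comp <|
      tendsto_atTop_mono (fun j => Nat.le_mul_of_pos_right _ (Nat.pos_of_ne_zero hk0))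
        (tendsto_pow_atTop_atTop_of_one_lt one_lt_two)
  rw [hasSum_iff_tendsto_nat_of_nonneg (fun j => by positivity)]
  simp_rw [hstep, Finset.sum_range_sub']
  simpa [t] using tendsto_const_nhds.sub htend

end Real

/-- For any integer `r ≥ 2`:
`∑_{n=0}^∞ 1 / (F_{2^r n + 2^{r-1}} Φ^{2^r n + 2^{r-1}}) = ∑_{n=1}^∞ 1 / F_{2^r n}`. -/
theorem statement19 (r : ℕ) (hr : 2 ≤ r) :
    ∑' n : ℕ, 1 / ((Nat.fib (2 ^ r * n + 2 ^ (r - 1)) : ℝ) *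
        Phi ^ (2 ^ r * n + 2 ^ (r - 1))) =
      ∑' n : ℕ, 1 / (Nat.fib (2 ^ r * (n + 1)) : ℝ) := by
  rw [show Phi = φ from rfl]
  obtain ⟨s, rfl⟩ : ∃ s, r = s + 1 := ⟨r - 1, by omega⟩
  set g : ℕ → ℝ := fun m => 1 / (Nat.fib (2 ^ (s + 1) * m) : ℝ)
  have hg : Summable g :=
    summable_one_div_fib.comp_injective fun _ _ h => Nat.eq_of_mul_eq_mul_left (by positivity) h
  have hrow (n : ℕ) : HasSum (fun j => g (2 ^ j * (2 * n + 1)))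
      (1 / ((Nat.fib (2 ^ (s + 1) * n + 2 ^ s) : ℝ) * φ ^ (2 ^ (s + 1) * n + 2 ^ s))) := by
    rw [show 2 ^ (s + 1) * n + 2 ^ s = 2 ^ s * (2 * n + 1) by ring]
    have hk : Even (2 ^ s * (2 * n + 1)) := (Nat.even_pow.mpr ⟨even_two, by omega⟩).mul_right _
    convert hasSum_one_div_fib_two_pow_mul hk (by positivity) using 3 with j
    congr 2
    ring
  calc _ = ∑' (n) (j), g (2 ^ j * (2 * n + 1)) := tsum_congr fun n => (hrow n).tsum_eq.symm
    _ = ∑' m, g m := (tsum_eq_tsum_tsum_two_pow_mul_odd hg (by simp [g])).symm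
    _ = _ := by rw [hg.tsum_eq_zero_add]; simp [g]
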